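/- arXiv:1008.0999 — 4 statements merged into one kernel-verified Lean document; each statement's English description precedes it below -/
import Mathlib

section
/- The kernel of the natural map r : Q^×/(Q^×)^4 → Q(i)^×/(Q(i)^×)^4 induced by the inclusion Q ⊆ Q(i) has order 2 and is generated by the class of -4. -/
open IntermediateField in
/-- The field `ℚ(i)` of Gaussian rationals, realized as a subfield of `ℂ`. -/
noncomputable abbrev GaussQ : IntermediateField ℚ ℂ := ℚ⟮Complex.I⟯

/-- The natural map `ℚ^×/(ℚ^×)⁴ → ℚ(i)^×/(ℚ(i)^×)⁴` induced by the
inclusion `ℚ ⊆ ℚ(i)`. -/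
noncomputable def rMap :
    (ℚˣ ⧸ (powMonoidHom 4 : ℚˣ →* ℚˣ).range) →*
      (GaussQˣ ⧸ (powMonoidHom 4 : GaussQˣ →* GaussQˣ).range) :=
  QuotientGroup.map _ _ (Units.map (algebraMap ℚ GaussQ).toMonoidHom)
    (by
      rintro x ⟨y, rfl⟩
      exact ⟨Units.map (algebraMap ℚ GaussQ).toMonoidHom y, by
        simp [powMonoidHom, ← map_pow]⟩)

/-!
Write an element of `ℚ(i)` as `a + b i`. Its fourth power has imaginary part
`4ab(a - b)(a + b)`, so it is rational only for `a + b i ∈ {a, b i, a(1 ± i)}`, whose fourth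
powers are `a⁴`, `b⁴` and `-4a⁴`. Hence a rational that becomes a fourth power in `ℚ(i)` is `c⁴`
or `-4c⁴`. Conversely `-4 = (1 + i)⁴`, and the class of `-4` has order exactly `2`:
`(-4)² = 2⁴`, while `-4` is negative.
-/

open Complex

lemma exists_rat_eq_add_mul_I_of_mem_gaussQ {z : ℂ} (hz : z ∈ GaussQ) :
    ∃ a b : ℚ, z = a + b * I := by
  rw [← IntermediateField.mem_toSubalgebra,
    IntermediateField.adjoin_simple_toSubalgebra_of_isAlgebraic isIntegral_rat_I.isAlgebraic] at hz
  induction hz using Algebra.adjoin_induction with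
  | mem x hx => exact ⟨0, 1, by simp [Set.mem_singleton_iff.mp hx]⟩
  | algebraMap q => exact ⟨q, 0, by simp⟩
  | add x y _ _ hx hy =>
    obtain ⟨a, b, rfl⟩ := hx
    obtain ⟨c, d, rfl⟩ := hy
    exact ⟨a + c, b + d, by push_cast; ring⟩
  | mul x y _ _ hx hy =>
    obtain ⟨a, b, rfl⟩ := hx
    obtain ⟨c, d, rfl⟩ := hy
    exact ⟨a * c - b * d, a * d + b * c, by push_cast; linear_combination (b * d : ℂ) * I_sq⟩

lemma add_mul_I_pow_four (a b : ℚ) :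
    (a + b * I : ℂ) ^ 4 =
      ((a ^ 4 - 6 * a ^ 2 * b ^ 2 + b ^ 4 : ℚ) : ℂ) +
        ((4 * (a ^ 3 * b - a * b ^ 3) : ℚ) : ℂ) * I := by
  push_cast
  linear_combination ((6 : ℂ) * a ^ 2 * b ^ 2 + 4 * a * b ^ 3 * I + b ^ 4 * (I ^ 2 - 1)) * I_sq

lemma exists_eq_pow_four_or_eq_neg_four_mul_pow_four_of_mul_eq_zero {R : Type*} [CommRing R]
    [NoZeroDivisors R] {a b : R} (h : a * b * (a - b) * (a + b) = 0) :
    (∃ c, a ^ 4 - 6 * a ^ 2 * b ^ 2 + b ^ 4 = c ^ 4) ∨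
      ∃ c, a ^ 4 - 6 * a ^ 2 * b ^ 2 + b ^ 4 = -4 * c ^ 4 := by
  simp only [mul_eq_zero, sub_eq_zero, add_eq_zero_iff_eq_neg] at h
  rcases h with ((rfl | rfl) | rfl) | rfl
  · exact .inl ⟨b, by ring⟩
  · exact .inl ⟨a, by ring⟩
  · exact .inr ⟨a, by ring⟩
  · exact .inr ⟨b, by ring⟩

lemma eq_and_eq_zero_of_ratCast_add_mul_I_eq_ratCast {x y q : ℚ} (h : (x + y * I : ℂ) = q) :
    x = q ∧ y = 0 := by
  simpa [Complex.ext_iff] using h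

lemma exists_eq_pow_four_or_eq_neg_four_mul_pow_four_of_add_mul_I_pow_four_eq {q a b : ℚ}
    (h : (a + b * I : ℂ) ^ 4 = q) :
    (∃ c, q = c ^ 4) ∨ ∃ c, q = -4 * c ^ 4 := by
  rw [add_mul_I_pow_four] at h
  obtain ⟨rfl, him⟩ := eq_and_eq_zero_of_ratCast_add_mul_I_eq_ratCast h
  exact exists_eq_pow_four_or_eq_neg_four_mul_pow_four_of_mul_eq_zero
    (by linear_combination him / 4)

lemma QuotientGroup.mk_mul_pow {G : Type*} [CommGroup G] (n : ℕ) (x y : G) :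
    (QuotientGroup.mk (x * y ^ n) : G ⧸ (powMonoidHom n : G →* G).range) = QuotientGroup.mk x :=
  QuotientGroup.eq_iff_div_mem.2 ⟨y, by simp⟩

lemma mk_mem_ker_rMap_iff (u : ℚˣ) :
    (QuotientGroup.mk u : ℚˣ ⧸ (powMonoidHom 4 : ℚˣ →* ℚˣ).range) ∈ rMap.ker ↔
      ∃ w : GaussQˣ, ((w : GaussQ) : ℂ) ^ 4 = (u : ℚ) := by
  rw [MonoidHom.mem_ker, rMap, QuotientGroup.map_mk, QuotientGroup.eq_one_iff]
  refine exists_congr fun w => ?_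
  rw [powMonoidHom_apply, Units.ext_iff, ← Subtype.coe_inj]
  rfl

lemma mk_neg_four_mem_ker_rMap :
    (QuotientGroup.mk (Units.mk0 (-4 : ℚ) (by norm_num)) :
      ℚˣ ⧸ (powMonoidHom 4 : ℚˣ →* ℚˣ).range) ∈ rMap.ker := by
  have h : (1 : ℂ) + I ∈ GaussQ :=
    add_mem (one_mem _) (IntermediateField.mem_adjoin_simple_self ℚ I)
  refine (mk_mem_ker_rMap_iff _).2
    ⟨Units.mk0 ⟨1 + I, h⟩ (by simp [← Subtype.coe_inj, Complex.ext_iff]), ?_⟩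
  simp only [Units.val_mk0, Rat.cast_neg, Rat.cast_ofNat]
  linear_combination (I ^ 2 + 4 * I + 5) * I_sq

lemma eq_one_or_eq_mk_neg_four_of_mem_ker_rMap
    {x : ℚˣ ⧸ (powMonoidHom 4 : ℚˣ →* ℚˣ).range} (hx : x ∈ rMap.ker) :
    x = 1 ∨ x = QuotientGroup.mk (Units.mk0 (-4 : ℚ) (by norm_num)) := by
  induction x using QuotientGroup.induction_on with | H u => ?_
  obtain ⟨w, hw⟩ := (mk_mem_ker_rMap_iff u).1 hx
  obtain ⟨a, b, hab⟩ := exists_rat_eq_add_mul_I_of_mem_gaussQ (w : GaussQ).2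
  rw [hab] at hw
  rcases exists_eq_pow_four_or_eq_neg_four_mul_pow_four_of_add_mul_I_pow_four_eq hw with
    ⟨c, hc⟩ | ⟨c, hc⟩
  · have hc0 : c ≠ 0 := by rintro rfl; simp at hc
    left
    exact (QuotientGroup.eq_one_iff _).2 ⟨Units.mk0 c hc0, Units.ext (by simp [hc])⟩
  · have hc0 : c ≠ 0 := by rintro rfl; simp at hc
    right
    rw [show u = Units.mk0 (-4) (by norm_num) * Units.mk0 c hc0 ^ 4 from Units.ext (by simp [hc]),
      QuotientGroup.mk_mul_pow]

lemma orderOf_mk_neg_four :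
    orderOf (QuotientGroup.mk (Units.mk0 (-4 : ℚ) (by norm_num)) :
      ℚˣ ⧸ (powMonoidHom 4 : ℚˣ →* ℚˣ).range) = 2 := by
  refine orderOf_eq_prime ?_ ?_
  · rw [← QuotientGroup.mk_pow, QuotientGroup.eq_one_iff]
    exact ⟨Units.mk0 2 two_ne_zero, Units.ext (by norm_num)⟩
  · rw [ne_eq, QuotientGroup.eq_one_iff]
    rintro ⟨y, hy⟩
    have := congrArg Units.val hy
    simp only [powMonoidHom_apply, Units.val_pow_eq_pow_val, Units.val_mk0] at this
    linarith [Even.pow_nonneg (n := 4) (by decide) (y : ℚ)]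

/-- The kernel of the natural map `r : ℚ^×/(ℚ^×)⁴ → ℚ(i)^×/(ℚ(i)^×)⁴` has
order `2` and is generated by the class of `-4`. -/
theorem stmt_1 :
    rMap.ker =
      Subgroup.closure {QuotientGroup.mk (Units.mk0 (-4 : ℚ) (by norm_num))} ∧
    Nat.card rMap.ker = 2 := by
  have hker : rMap.ker =
      Subgroup.closure {QuotientGroup.mk (Units.mk0 (-4 : ℚ) (by norm_num))} := by
    rw [← Subgroup.zpowers_eq_closure]
    refine le_antisymm (fun x hx => ?_) (Subgroup.zpowers_le.2 mk_neg_four_mem_ker_rMap)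
    rcases eq_one_or_eq_mk_neg_four_of_mem_ker_rMap hx with rfl | rfl
    exacts [one_mem _, Subgroup.mem_zpowers _]
  refine ⟨hker, ?_⟩
  rw [hker, ← Subgroup.zpowers_eq_closure, Nat.card_zpowers, orderOf_mk_neg_four]
end

section
/- If p ≥ 37 is a prime, then any smooth plane diagonal quartic curve a·x^4 + b·y^4 + c·z^4 = 0 with a, b, c ∈ F_p^× has a nonzero F_p-rational point. -/
/-!
Fix a character `χ` of order `n ∣ q - 1` on `𝔽_q`. Since `#{x | x ^ n = w} = ∑_{j < n} χ ^ j w`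
for `w ≠ 0`, counting the affine points of `a x ^ n + b y ^ n + c = 0` expands into Jacobi sums
`J(χ ^ i, χ ^ j)`. The trivial ones contribute `q`; the anti-diagonal ones
`J(χ ^ i, χ ^ (-i)) = -χ ^ i (-1)` add up to `1` minus the number of points at infinity; the
remaining `(n - 1)(n - 2)` have absolute value `√q`. So the projective curve has at least
`q + 1 - (n - 1)(n - 2)√q` points, which is positive for `n = 4`, `q = p ≥ 37`. If `p ≡ 3 (mod 4)`
there is no character of order 4, but then every square is a fourth power and the conic case
`n = 2` suffices.
-/

open Finset

theorem FiniteField.exists_isPrimitiveRoot {F : Type*} [Field F] [Fintype F] {n : ℕ}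
    (hn : n ∣ Fintype.card F - 1) : ∃ ζ : F, IsPrimitiveRoot ζ n := by
  obtain ⟨g, hg⟩ := IsCyclic.exists_ofOrder_eq_natCard (α := Fˣ)
  rw [Nat.card_units, Nat.card_eq_fintype_card] at hg
  have hq : 0 < Fintype.card F - 1 := Nat.sub_pos_of_lt Fintype.one_lt_card
  have hn0 : (Fintype.card F - 1) / n ≠ 0 :=
    (Nat.div_pos (Nat.le_of_dvd hq hn) (Nat.pos_of_dvd_of_pos hn hq)).ne'
  refine ⟨(g ^ ((Fintype.card F - 1) / n) : Fˣ), IsPrimitiveRoot.coe_units_iff.mpr ?_⟩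
  have h := (hg ▸ IsPrimitiveRoot.orderOf g).pow_of_dvd hn0 (Nat.div_dvd_of_dvd hn)
  rwa [Nat.div_div_self hn hq.ne'] at h

theorem FiniteField.pow_card_add_one_div_four_pow_four {F : Type*} [Field F] [Fintype F]
    (hF : Fintype.card F % 4 = 3) (u : F) : (u ^ ((Fintype.card F + 1) / 4)) ^ 4 = u ^ 2 := by
  rw [← pow_mul, Nat.div_mul_cancel (by omega), pow_succ, FiniteField.pow_card, sq]

theorem sub_mem_erase_range_zero {n i : ℕ} (hi : i ∈ (range n).erase 0) :
    n - i ∈ (range n).erase 0 := by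
  simp only [mem_erase, mem_range] at hi ⊢
  omega

namespace MulChar

variable {F : Type*} [Field F] {R : Type*} [CommRing R]

theorem pow_apply_of_ne_zero (χ : MulChar F R) (j : ℕ) {w : F} (hw : w ≠ 0) :
    (χ ^ j) w = χ w ^ j := by
  simpa using χ.pow_apply_coe j (Units.mk0 w hw)

theorem apply_eq_one_iff_exists_pow_eq [Finite F] (χ : MulChar F R) {w : F} (hw : w ≠ 0) :
    χ w = 1 ↔ ∃ x, x ^ orderOf χ = w := by
  constructor
  · intro h
    obtain ⟨g, hg⟩ := IsCyclic.exists_generator (α := Fˣ)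
    have hord : orderOf (χ g) = orderOf χ := by
      refine orderOf_eq_orderOf_iff.mpr fun m => ?_
      rw [← pow_apply_coe, ← one_apply_coe (R' := R) g, ← eq_iff hg]
    obtain ⟨k, hk⟩ : Units.mk0 w hw ∈ Submonoid.powers g :=
      mem_powers_iff_mem_zpowers.mpr (hg _)
    have hwk : w = (g : F) ^ k := by simpa using congrArg Units.val hk.symm
    obtain ⟨m, rfl⟩ : orderOf χ ∣ k := by
      rw [← hord, orderOf_dvd_iff_pow_eq_one, ← map_pow, ← hwk, h]
    exact ⟨(g : F) ^ m, by rw [hwk, ← pow_mul, mul_comm]⟩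
  · rintro ⟨x, rfl⟩
    have hx : x ≠ 0 := by rintro rfl; exact hw (zero_pow χ.orderOf_pos.ne')
    rw [map_pow, ← pow_apply_of_ne_zero χ _ hx, pow_orderOf_eq_one, one_apply hx.isUnit]

theorem norm_apply_of_ne_zero [Finite F] (χ : MulChar F ℂ) {w : F} (hw : w ≠ 0) :
    ‖χ w‖ = 1 := by
  refine Complex.norm_eq_one_of_pow_eq_one ?_ χ.orderOf_pos.ne'
  rw [← χ.pow_apply_of_ne_zero _ hw, pow_orderOf_eq_one, one_apply (isUnit_iff_ne_zero.2 hw)]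

end MulChar

section DiagonalCurve

variable {F : Type*} [Field F] [Fintype F]

theorem norm_jacobiSum_eq_sqrt {χ ψ : MulChar F ℂ} (hχ : χ ≠ 1) (hψ : ψ ≠ 1)
    (hχψ : χ * ψ ≠ 1) : ‖jacobiSum χ ψ‖ = √(Fintype.card F) := by
  have hconj : starRingEnd ℂ (jacobiSum χ ψ) = jacobiSum χ⁻¹ ψ⁻¹ := by
    simp only [jacobiSum, map_sum, map_mul]
    exact sum_congr rfl fun x _ => by rw [← MulChar.star_apply', ← MulChar.star_apply']; rfl
  have hchar : ringChar ℂ ≠ ringChar F := by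
    simpa only [ringChar.eq_zero] using (CharP.ringChar_ne_zero_of_finite F).symm
  have h := jacobiSum_mul_jacobiSum_inv hchar hχ hψ hχψ
  rw [← hconj, Complex.mul_conj', ← Complex.ofReal_natCast, ← Complex.ofReal_pow,
    Complex.ofReal_inj] at h
  rw [← h, Real.sqrt_sq (norm_nonneg _)]

theorem sum_add_sum_add_sum_jacobiSum_eq {χ : MulChar F ℂ} {n : ℕ} (hχ : orderOf χ = n)
    {α β : F} (hα : α ≠ 0) (hβ : β ≠ 0) :
    ∑ i ∈ range n, (χ ^ i) α + ∑ j ∈ range n, (χ ^ j) β +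
        ∑ i ∈ range n, ∑ j ∈ range n, (χ ^ i) α * (χ ^ j) β * jacobiSum (χ ^ i) (χ ^ j) =
      Fintype.card F + ∑ i ∈ (range n).erase 0, ∑ j ∈ (range n).erase 0,
        (χ ^ i) α * (χ ^ j) β * jacobiSum (χ ^ i) (χ ^ j) := by
  have h0 : 0 ∈ range n := mem_range.2 (hχ ▸ χ.orderOf_pos)
  have hne {i : ℕ} (hi : i ∈ (range n).erase 0) : χ ^ i ≠ 1 := by
    rw [mem_erase, mem_range] at hi
    exact pow_ne_one_of_lt_orderOf hi.1 (hχ ▸ hi.2)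
  have hJ0 : ∑ j ∈ (range n).erase 0, (χ ^ j) β * jacobiSum 1 (χ ^ j) =
      -∑ j ∈ (range n).erase 0, (χ ^ j) β := by
    rw [← sum_neg_distrib]
    exact sum_congr rfl fun j hj => by rw [jacobiSum_one_nontrivial (hne hj), mul_neg_one]
  have hJ0' : ∑ i ∈ (range n).erase 0, (χ ^ i) α * jacobiSum (χ ^ i) 1 =
      -∑ i ∈ (range n).erase 0, (χ ^ i) α := by
    rw [← sum_neg_distrib]
    exact sum_congr rfl fun i hi => by
      rw [jacobiSum_comm, jacobiSum_one_nontrivial (hne hi), mul_neg_one]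
  simp_rw [← add_sum_erase (range n) _ h0, pow_zero, MulChar.one_apply (isUnit_iff_ne_zero.2 hα),
    MulChar.one_apply (isUnit_iff_ne_zero.2 hβ), one_mul, mul_one, jacobiSum_one_one]
  rw [sum_add_distrib, hJ0, hJ0']
  ring

theorem norm_sum_sum_jacobiSum_le {χ : MulChar F ℂ} {n : ℕ} (hχ : orderOf χ = n)
    {α β : F} (hα : α ≠ 0) (hβ : β ≠ 0) :
    ‖∑ i ∈ (range n).erase 0, ∑ j ∈ ((range n).erase 0).erase (n - i),
        (χ ^ i) α * (χ ^ j) β * jacobiSum (χ ^ i) (χ ^ j)‖ ≤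
      ((n - 1) * (n - 2) : ℕ) * √(Fintype.card F) := by
  have hpow {k : ℕ} (hk : k ≠ 0) (hkn : k ≠ n) (hk2 : k < 2 * n) : χ ^ k ≠ 1 := by
    rw [Ne, ← orderOf_dvd_iff_pow_eq_one, hχ]
    exact fun h => hkn (Nat.eq_of_dvd_of_lt_two_mul hk h hk2)
  have hterm {i j : ℕ} (hi : i ∈ (range n).erase 0)
      (hj : j ∈ ((range n).erase 0).erase (n - i)) :
      ‖(χ ^ i) α * (χ ^ j) β * jacobiSum (χ ^ i) (χ ^ j)‖ = √(Fintype.card F) := by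
    simp only [mem_erase, mem_range] at hi hj
    rw [norm_mul, norm_mul, MulChar.norm_apply_of_ne_zero _ hα,
      MulChar.norm_apply_of_ne_zero _ hβ, one_mul, one_mul,
      norm_jacobiSum_eq_sqrt (hpow hi.1 (by omega) (by omega))
        (hpow hj.2.1 (by omega) (by omega))
        (by rw [← pow_add]; exact hpow (by omega) (by omega) (by omega))]
  have hcard {i : ℕ} (hi : i ∈ (range n).erase 0) :
      #(((range n).erase 0).erase (n - i)) = n - 2 := by
    rw [card_erase_of_mem (sub_mem_erase_range_zero hi),
      card_erase_of_mem (mem_range.2 (hχ ▸ χ.orderOf_pos)), card_range, Nat.sub_sub]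
  calc _ ≤ ∑ i ∈ (range n).erase 0, ∑ j ∈ ((range n).erase 0).erase (n - i),
          ‖(χ ^ i) α * (χ ^ j) β * jacobiSum (χ ^ i) (χ ^ j)‖ :=
        (norm_sum_le _ _).trans (sum_le_sum fun i _ => norm_sum_le _ _)
    _ = ∑ i ∈ (range n).erase 0, ((n - 2 : ℕ) : ℝ) * √(Fintype.card F) := by
        refine sum_congr rfl fun i hi => ?_
        rw [sum_congr rfl fun j hj => hterm hi hj, sum_const, hcard hi, nsmul_eq_mul]
    _ = _ := by
        rw [sum_const, card_erase_of_mem (mem_range.2 (hχ ▸ χ.orderOf_pos)), card_range,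
          nsmul_eq_mul]
        push_cast
        ring

variable [DecidableEq F]

theorem card_pow_eq_eq_sum_mulChar {χ : MulChar F ℂ} {n : ℕ} (hχ : orderOf χ = n) (w : F) :
    (#{x : F | x ^ n = w} : ℂ) = (if w = 0 then 1 else 0) + ∑ j ∈ range n, (χ ^ j) w := by
  have hn : n ≠ 0 := hχ ▸ χ.orderOf_pos.ne'
  by_cases hw : w = 0
  · subst hw
    simp [filter_eq', pow_eq_zero_iff hn, MulChar.map_zero]
  obtain ⟨ζ, hζ⟩ := FiniteField.exists_isPrimitiveRoot (hχ ▸ χ.orderOf_dvd_card_sub_one)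
  have hroots : #{x : F | x ^ n = w} = Multiset.card (Polynomial.nthRoots n w) := by
    rw [← Multiset.toFinset_card_of_nodup (hζ.nthRoots_nodup hw)]
    congr 1
    ext x
    simp [Polynomial.mem_nthRoots (Nat.pos_of_ne_zero hn)]
  have hχw : χ w ^ n = 1 := by
    rw [← χ.pow_apply_of_ne_zero n hw, ← hχ, pow_orderOf_eq_one,
      MulChar.one_apply (isUnit_iff_ne_zero.mpr hw)]
  rw [hroots, hζ.card_nthRoots, if_neg hw, zero_add,
    sum_congr rfl fun j _ => χ.pow_apply_of_ne_zero j hw, ← hχ,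
    ← χ.apply_eq_one_iff_exists_pow_eq hw]
  split_ifs with h1
  · simp [h1]
  · rw [geom_sum_eq h1, hχ, hχw, sub_self, zero_div, Nat.cast_zero]

theorem card_diagonal_eq_sum_card_mul_card (n : ℕ) {a b c : F} (ha : a ≠ 0) (hb : b ≠ 0)
    (hc : c ≠ 0) :
    #{z : F × F | a * z.1 ^ n + b * z.2 ^ n + c = 0} =
      ∑ s : F, #{x : F | x ^ n = -c / a * s} * #{y : F | y ^ n = -c / b * (1 - s)} := by
  have hfiber (x : F) : #{y : F | a * x ^ n + b * y ^ n + c = 0} =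
      #{y : F | y ^ n = (-c - a * x ^ n) / b} := by
    congr 1
    ext y
    simp only [mem_filter, mem_univ, true_and, eq_div_iff hb]
    constructor <;> intro h <;> linear_combination h
  calc #{z : F × F | a * z.1 ^ n + b * z.2 ^ n + c = 0}
      = ∑ x : F, #{y : F | y ^ n = (-c - a * x ^ n) / b} := by
        simp_rw [card_filter, Fintype.sum_prod_type, ← card_filter, hfiber]
    _ = ∑ u : F, ∑ x with x ^ n = u, #{y : F | y ^ n = (-c - a * u) / b} :=
        (sum_fiberwise' univ (· ^ n) fun u => #{y : F | y ^ n = (-c - a * u) / b}).symm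
    _ = ∑ u : F, #{x : F | x ^ n = u} * #{y : F | y ^ n = (-c - a * u) / b} := by
        simp_rw [sum_const, smul_eq_mul]
    _ = _ := by
        refine (Fintype.sum_equiv (Equiv.mulLeft₀ (-c / a) (div_ne_zero (neg_ne_zero.2 hc) ha))
          _ _ fun s => ?_).symm
        rw [Equiv.mulLeft₀_apply, show (-c - a * (-c / a * s)) / b = -c / b * (1 - s) by
          field_simp; ring]

theorem sum_card_mul_card_eq_sum_jacobiSum {χ : MulChar F ℂ} {n : ℕ} (hχ : orderOf χ = n)
    {α β : F} (hα : α ≠ 0) (hβ : β ≠ 0) :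
    ∑ s : F, (#{x : F | x ^ n = α * s} : ℂ) * #{y : F | y ^ n = β * (1 - s)} =
      ∑ i ∈ range n, (χ ^ i) α + ∑ j ∈ range n, (χ ^ j) β +
        ∑ i ∈ range n, ∑ j ∈ range n, (χ ^ i) α * (χ ^ j) β * jacobiSum (χ ^ i) (χ ^ j) := by
  have hjac (i j : ℕ) : ∑ s : F, (χ ^ i) (α * s) * (χ ^ j) (β * (1 - s)) =
      (χ ^ i) α * (χ ^ j) β * jacobiSum (χ ^ i) (χ ^ j) := by
    simp only [jacobiSum, mul_sum, map_mul]
    exact sum_congr rfl fun s _ => by ring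
  simp_rw [card_pow_eq_eq_sum_mulChar hχ, mul_eq_zero, hα, hβ, false_or, sub_eq_zero,
    add_mul, mul_add, sum_add_distrib, ite_mul, mul_ite, one_mul, mul_one, zero_mul, mul_zero,
    sum_mul_sum, ← hjac]
  rw [sum_comm (s := univ), sum_congr rfl fun i _ => sum_comm (s := univ)]
  simp only [ite_self, sum_ite_eq', mem_univ, ↓reduceIte, one_ne_zero, map_mul, sub_zero, map_one,
    mul_one, zero_add, sum_ite_eq]
  ring

theorem sum_sum_jacobiSum_add_card_pow_eq {χ : MulChar F ℂ} {n : ℕ} (hχ : orderOf χ = n)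
    {α β : F} (hα : α ≠ 0) (hβ : β ≠ 0) :
    ∑ i ∈ (range n).erase 0, ∑ j ∈ (range n).erase 0,
        (χ ^ i) α * (χ ^ j) β * jacobiSum (χ ^ i) (χ ^ j) + #{x : F | x ^ n = -(α / β)} =
      1 + ∑ i ∈ (range n).erase 0, ∑ j ∈ ((range n).erase 0).erase (n - i),
        (χ ^ i) α * (χ ^ j) β * jacobiSum (χ ^ i) (χ ^ j) := by
  have hw : -(α / β) ≠ 0 := neg_ne_zero.2 (div_ne_zero hα hβ)
  have hanti {i : ℕ} (hi : i ∈ (range n).erase 0) :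
      (χ ^ i) α * (χ ^ (n - i)) β * jacobiSum (χ ^ i) (χ ^ (n - i)) = -(χ ^ i) (-(α / β)) := by
    rw [mem_erase, mem_range] at hi
    have hinv : χ ^ (n - i) = (χ ^ i)⁻¹ := eq_inv_of_mul_eq_one_right <| by
      rw [← pow_add, Nat.add_sub_cancel' hi.2.le, ← hχ, pow_orderOf_eq_one]
    rw [hinv, jacobiSum_nontrivial_inv (pow_ne_one_of_lt_orderOf hi.1 (hχ ▸ hi.2)),
      MulChar.inv_apply', div_eq_mul_inv, neg_eq_neg_one_mul (α * β⁻¹), map_mul, map_mul]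
    ring
  have hsum : ∑ i ∈ (range n).erase 0, (χ ^ i) (-(α / β)) =
      #{x : F | x ^ n = -(α / β)} - 1 := by
    rw [card_pow_eq_eq_sum_mulChar hχ, if_neg hw, zero_add,
      ← add_sum_erase _ _ (mem_range.2 (hχ ▸ χ.orderOf_pos)), pow_zero,
      MulChar.one_apply (isUnit_iff_ne_zero.2 hw), add_sub_cancel_left]
  rw [sum_congr rfl fun i hi => (add_sum_erase _ _ (sub_mem_erase_range_zero hi)).symm,
    sum_add_distrib, sum_congr rfl fun i hi => hanti hi, sum_neg_distrib, hsum]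
  ring

/-- The right-hand side counts the points of the projective curve `a x ^ n + b y ^ n + c z ^ n = 0`:
those with `z = 1`, and those `(x : 1 : 0)` at infinity. -/
theorem le_card_diagonal_add_card_pow {n : ℕ} (hn : n ∣ Fintype.card F - 1) {a b c : F}
    (ha : a ≠ 0) (hb : b ≠ 0) (hc : c ≠ 0) :
    (Fintype.card F + 1 : ℝ) - ((n - 1) * (n - 2) : ℕ) * √(Fintype.card F) ≤
      #{z : F × F | a * z.1 ^ n + b * z.2 ^ n + c = 0} + #{x : F | x ^ n = -(b / a)} := by
  have hn0 : n ≠ 0 := (Nat.pos_of_dvd_of_pos hn (Nat.sub_pos_of_lt Fintype.one_lt_card)).ne'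
  obtain ⟨χ, hχ⟩ := MulChar.exists_mulChar_orderOf F hn (Complex.isPrimitiveRoot_exp n hn0)
  have hα : -c / a ≠ 0 := div_ne_zero (neg_ne_zero.2 hc) ha
  have hβ : -c / b ≠ 0 := div_ne_zero (neg_ne_zero.2 hc) hb
  have hw : -(-c / a / (-c / b)) = -(b / a) := by field_simp
  have hcount : ((#{z : F × F | a * z.1 ^ n + b * z.2 ^ n + c = 0} +
      #{x : F | x ^ n = -(b / a)} : ℕ) : ℂ) - (Fintype.card F + 1) =
        ∑ i ∈ (range n).erase 0, ∑ j ∈ ((range n).erase 0).erase (n - i),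
          (χ ^ i) (-c / a) * (χ ^ j) (-c / b) * jacobiSum (χ ^ i) (χ ^ j) := by
    rw [Nat.cast_add, card_diagonal_eq_sum_card_mul_card n ha hb hc, Nat.cast_sum, ← hw]
    push_cast
    rw [sum_card_mul_card_eq_sum_jacobiSum hχ hα hβ, sum_add_sum_add_sum_jacobiSum_eq hχ hα hβ,
      add_assoc, sum_sum_jacobiSum_add_card_pow_eq hχ hα hβ]
    ring
  have h := norm_sum_sum_jacobiSum_le hχ hα hβ
  rw [← hcount, show ∀ m : ℕ, (m : ℂ) - (Fintype.card F + 1) =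
    ((m - (Fintype.card F + 1) : ℝ) : ℂ) by intro m; push_cast; ring,
    Complex.norm_real, Real.norm_eq_abs] at h
  push_cast at h ⊢
  linarith [neg_abs_le ((#{z : F × F | a * z.1 ^ n + b * z.2 ^ n + c = 0} : ℝ) +
    #{x : F | x ^ n = -(b / a)} - (Fintype.card F + 1))]

theorem exists_ne_zero_diagonal_eq_zero {n : ℕ} (hn : n ∣ Fintype.card F - 1) {a b c : F}
    (ha : a ≠ 0) (hb : b ≠ 0) (hc : c ≠ 0)
    (hq : ((n - 1) * (n - 2) : ℕ) * √(Fintype.card F) < Fintype.card F + 1) :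
    ∃ x y z : F, ¬(x = 0 ∧ y = 0 ∧ z = 0) ∧ a * x ^ n + b * y ^ n + c * z ^ n = 0 := by
  have hpos : 0 < #{z : F × F | a * z.1 ^ n + b * z.2 ^ n + c = 0} +
      #{x : F | x ^ n = -(b / a)} := by
    exact_mod_cast (sub_pos.2 hq).trans_le (le_card_diagonal_add_card_pow hn ha hb hc)
  rcases Nat.add_pos_iff_pos_or_pos.1 hpos with h | h
  · obtain ⟨⟨x, y⟩, hxy⟩ := card_pos.1 h
    refine ⟨x, y, 1, fun h => one_ne_zero h.2.2, ?_⟩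
    simpa using (mem_filter.1 hxy).2
  · obtain ⟨x, hx⟩ := card_pos.1 h
    refine ⟨x, 1, 0, fun h => one_ne_zero h.2.1, ?_⟩
    have hn0 : n ≠ 0 := (Nat.pos_of_dvd_of_pos hn (Nat.sub_pos_of_lt Fintype.one_lt_card)).ne'
    rw [(mem_filter.1 hx).2, one_pow, zero_pow hn0]
    field_simp
    ring

end DiagonalCurve

/-- If `p ≥ 37` is prime, then any smooth plane diagonal quartic curve
`a·x⁴ + b·y⁴ + c·z⁴ = 0` with `a, b, c ∈ F_p^×` has a nonzero
`F_p`-rational point. -/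
theorem stmt_13 (p : ℕ) (hp : p.Prime) (h37 : 37 ≤ p) (a b c : ZMod p)
    (ha : a ≠ 0) (hb : b ≠ 0) (hc : c ≠ 0) :
    ∃ x y z : ZMod p, ¬(x = 0 ∧ y = 0 ∧ z = 0) ∧
      a * x ^ 4 + b * y ^ 4 + c * z ^ 4 = 0 := by
  have : Fact p.Prime := ⟨hp⟩
  have hodd : p % 2 = 1 := Nat.odd_iff.mp (hp.odd_of_ne_two (by omega))
  rcases (by omega : p % 4 = 1 ∨ p % 4 = 3) with hp4 | hp4
  · have h37' : (37 : ℝ) ≤ p := by exact_mod_cast h37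
    refine exists_ne_zero_diagonal_eq_zero (by rw [ZMod.card]; omega) ha hb hc ?_
    rw [ZMod.card, show (4 - 1) * (4 - 2) = 6 from rfl, Nat.cast_ofNat]
    nlinarith [Real.sq_sqrt (Nat.cast_nonneg p : (0 : ℝ) ≤ p), Real.sqrt_nonneg p]
  · obtain ⟨x, y, z, hxyz, h⟩ := exists_ne_zero_diagonal_eq_zero (n := 2)
      (by rw [ZMod.card]; omega) ha hb hc
      (by rw [show (2 - 1) * (2 - 2) = 0 from rfl, Nat.cast_zero, zero_mul]; positivity)
    have hfour := FiniteField.pow_card_add_one_div_four_pow_four (F := ZMod p)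
      (by rw [ZMod.card]; exact hp4)
    rw [ZMod.card] at hfour
    refine ⟨x ^ ((p + 1) / 4), y ^ ((p + 1) / 4), z ^ ((p + 1) / 4), fun h0 => hxyz ?_, ?_⟩
    · exact ⟨eq_zero_of_pow_eq_zero h0.1, eq_zero_of_pow_eq_zero h0.2.1,
        eq_zero_of_pow_eq_zero h0.2.2⟩
    · rwa [hfour, hfour, hfour]
end

section
/- For every odd prime ℓ with 3 ≤ ℓ ≤ 19 and ℓ ≠ 5, and all a_0, a_1, a_2, a_3 ∈ F_ℓ^×, the equation a_0·x_0^4 + a_1·x_1^4 + a_2·x_2^4 + a_3·x_3^4 = 0 has a solution in F_ℓ^4 with not all coordinates zero. -/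
/-!
When `q ≡ 3 (mod 4)`, every square `s ^ 2` in `𝔽_q` is the fourth power of `s ^ ((q + 1) / 4)`,
so the binary quartic `a x⁴ + b y⁴` takes the same values as the binary quadratic `a x² + b y²`,
and the latter represents every element of `𝔽_q`. This settles `ℓ = 3, 7, 11, 19`.
For `ℓ = 13, 17` the equation is solvable as soon as it is for one representative of each class
of coefficients modulo nonzero fourth powers, and those finitely many cases are checked by
computation.
-/

open Polynomial

section

variable {F : Type*} [Field F]

def DiagonalQuarticIsotropic (a : Fin 4 → F) : Prop :=
  ∃ x : Fin 4 → F, x ≠ 0 ∧ a 0 * x 0 ^ 4 + a 1 * x 1 ^ 4 + a 2 * x 2 ^ 4 + a 3 * x 3 ^ 4 = 0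

namespace DiagonalQuarticIsotropic

variable {a : Fin 4 → F}

theorem of_affine_zero {y₀ y₁ y₂ : F} (h : a 0 * y₀ ^ 4 + a 1 * y₁ ^ 4 + a 2 * y₂ ^ 4 + a 3 = 0) :
    DiagonalQuarticIsotropic a :=
  ⟨![y₀, y₁, y₂, 1], fun hx => one_ne_zero (congrFun hx 3), by simpa using h⟩

theorem of_mul_pow_four {b t : Fin 4 → F} (hb : DiagonalQuarticIsotropic b)
    (hbt : ∀ i, b i = a i * t i ^ 4) (ht : ∀ i, t i ≠ 0) : DiagonalQuarticIsotropic a := by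
  obtain ⟨x, hx, hsum⟩ := hb
  obtain ⟨i, hi⟩ := Function.ne_iff.mp hx
  refine ⟨fun i => t i * x i, Function.ne_iff.mpr ⟨i, mul_ne_zero (ht i) hi⟩, ?_⟩
  simp only [hbt] at hsum
  linear_combination hsum

theorem of_forall_mem_reps (R : Finset F)
    (hR : ∀ b : F, b ≠ 0 → ∃ t : F, t ≠ 0 ∧ b * t ^ 4 ∈ R)
    (hsol : ∀ r₀ ∈ R, ∀ r₁ ∈ R, ∀ r₂ ∈ R, ∀ r₃ ∈ R,
      ∃ y₀ y₁ y₂ : F, r₀ * y₀ ^ 4 + r₁ * y₁ ^ 4 + r₂ * y₂ ^ 4 + r₃ = 0)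
    (ha : ∀ i, a i ≠ 0) : DiagonalQuarticIsotropic a := by
  choose t ht htR using fun i => hR (a i) (ha i)
  obtain ⟨y₀, y₁, y₂, hy⟩ := hsol _ (htR 0) _ (htR 1) _ (htR 2) _ (htR 3)
  exact of_mul_pow_four (of_affine_zero hy) (fun _ => rfl) ht

end DiagonalQuarticIsotropic

namespace FiniteField

variable [Fintype F]

theorem exists_pow_four_eq_sq (hF : Fintype.card F % 4 = 3) (s : F) : ∃ u : F, u ^ 4 = s ^ 2 := by
  refine ⟨s ^ (Fintype.card F / 4 + 1), ?_⟩
  have hq : 4 * (Fintype.card F / 4 + 1) = Fintype.card F + 1 := by omega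
  rw [← pow_mul', hq, pow_succ, pow_card, sq]

theorem exists_mul_pow_four_add_mul_pow_four_add_eq_zero (hF : Fintype.card F % 4 = 3)
    {a b : F} (ha : a ≠ 0) (hb : b ≠ 0) (c : F) : ∃ x y : F, a * x ^ 4 + b * y ^ 4 + c = 0 := by
  obtain ⟨s, t, hst⟩ := exists_root_sum_quadratic (f := C a * X ^ 2) (g := C b * X ^ 2 + C c)
    (degree_C_mul_X_pow 2 ha) (by compute_degree!) (by omega)
  obtain ⟨x, hx⟩ := exists_pow_four_eq_sq hF s
  obtain ⟨y, hy⟩ := exists_pow_four_eq_sq hF t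
  refine ⟨x, y, ?_⟩
  simp only [eval_add, eval_mul, eval_C, eval_pow, eval_X] at hst
  rw [hx, hy]
  linear_combination hst

theorem diagonalQuarticIsotropic_of_card_mod_four_eq_three (hF : Fintype.card F % 4 = 3)
    {a : Fin 4 → F} (h₀ : a 0 ≠ 0) (h₁ : a 1 ≠ 0) : DiagonalQuarticIsotropic a := by
  obtain ⟨x, y, h⟩ := exists_mul_pow_four_add_mul_pow_four_add_eq_zero hF h₀ h₁ (a 3)
  exact DiagonalQuarticIsotropic.of_affine_zero (y₂ := 0) (by simpa using h)

end FiniteField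

end

-- `{1, g, g², g³}` for the primitive roots `g = 2` mod 13 and `g = 3` mod 17.
theorem ZMod.exists_mul_pow_four_mem_reps_thirteen :
    ∀ b : ZMod 13, b ≠ 0 →
      ∃ t : ZMod 13, t ≠ 0 ∧ b * t ^ 4 ∈ ({1, 2, 4, 8} : Finset (ZMod 13)) := by
  decide

theorem ZMod.affine_diagonalQuartic_solvable_thirteen :
    ∀ r₀ ∈ ({1, 2, 4, 8} : Finset (ZMod 13)), ∀ r₁ ∈ ({1, 2, 4, 8} : Finset (ZMod 13)),
    ∀ r₂ ∈ ({1, 2, 4, 8} : Finset (ZMod 13)), ∀ r₃ ∈ ({1, 2, 4, 8} : Finset (ZMod 13)),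
      ∃ y₀ y₁ y₂ : ZMod 13, r₀ * y₀ ^ 4 + r₁ * y₁ ^ 4 + r₂ * y₂ ^ 4 + r₃ = 0 := by
  decide

theorem ZMod.exists_mul_pow_four_mem_reps_seventeen :
    ∀ b : ZMod 17, b ≠ 0 →
      ∃ t : ZMod 17, t ≠ 0 ∧ b * t ^ 4 ∈ ({1, 3, 9, 10} : Finset (ZMod 17)) := by
  decide

set_option maxRecDepth 4000 in
theorem ZMod.affine_diagonalQuartic_solvable_seventeen :
    ∀ r₀ ∈ ({1, 3, 9, 10} : Finset (ZMod 17)), ∀ r₁ ∈ ({1, 3, 9, 10} : Finset (ZMod 17)),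
    ∀ r₂ ∈ ({1, 3, 9, 10} : Finset (ZMod 17)), ∀ r₃ ∈ ({1, 3, 9, 10} : Finset (ZMod 17)),
      ∃ y₀ y₁ y₂ : ZMod 17, r₀ * y₀ ^ 4 + r₁ * y₁ ^ 4 + r₂ * y₂ ^ 4 + r₃ = 0 := by
  decide

theorem stmt_15_general (ℓ : ℕ) (hℓ : ℓ.Prime) (h3 : 3 ≤ ℓ) (h19 : ℓ ≤ 19)
    (h5 : ℓ ≠ 5) (a : Fin 4 → ZMod ℓ) (ha : ∀ i, a i ≠ 0) :
    ∃ x : Fin 4 → ZMod ℓ, x ≠ 0 ∧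
      a 0 * x 0 ^ 4 + a 1 * x 1 ^ 4 + a 2 * x 2 ^ 4 + a 3 * x 3 ^ 4 = 0 := by
  have : Fact ℓ.Prime := ⟨hℓ⟩
  have hcases : ℓ % 4 = 3 ∨ ℓ = 13 ∨ ℓ = 17 := by
    interval_cases ℓ <;> first | omega | norm_num at hℓ
  rcases hcases with h | rfl | rfl
  · exact FiniteField.diagonalQuarticIsotropic_of_card_mod_four_eq_three
      (by rwa [ZMod.card]) (ha 0) (ha 1)
  · exact DiagonalQuarticIsotropic.of_forall_mem_reps _ ZMod.exists_mul_pow_four_mem_reps_thirteen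
      ZMod.affine_diagonalQuartic_solvable_thirteen ha
  · exact DiagonalQuarticIsotropic.of_forall_mem_reps _ ZMod.exists_mul_pow_four_mem_reps_seventeen
      ZMod.affine_diagonalQuartic_solvable_seventeen ha

/-- For every odd prime `ℓ` with `3 ≤ ℓ ≤ 19` and `ℓ ≠ 5`, and all nonzero
`a₀, a₁, a₂, a₃ ∈ F_ℓ`, the diagonal quartic
`a₀x₀⁴ + a₁x₁⁴ + a₂x₂⁴ + a₃x₃⁴ = 0` has a nonzero solution over `F_ℓ`. -/
theorem stmt_15 (ℓ : ℕ) (hℓ : ℓ.Prime) (hodd : Odd ℓ) (h3 : 3 ≤ ℓ) (h19 : ℓ ≤ 19)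
    (h5 : ℓ ≠ 5) (a : Fin 4 → ZMod ℓ) (ha : ∀ i, a i ≠ 0) :
    ∃ x : Fin 4 → ZMod ℓ, x ≠ 0 ∧
      a 0 * x 0 ^ 4 + a 1 * x 1 ^ 4 + a 2 * x 2 ^ 4 + a 3 * x 3 ^ 4 = 0 :=
  stmt_15_general ℓ hℓ h3 h19 h5 a ha
end

section
/- Let p be an odd prime and P = [y_1 : y_2 : y_3] a point on the smooth conic Z : a_1·Y_1^2 + a_2·Y_2^2 + a_3·Y_3^2 = 0 over F_p with a_1 a_2 a_3 ≠ 0 and y_1 y_2 y_3 ≠ 0. Then the four points [±α : ±β : ±γ] of the plane quartic C : a_1·X_1^4 + a_2·X_2^4 + a_3·X_3^4 = 0 over the algebraic closure, where α^2 = y_1, β^2 = y_2, γ^2 = y_3 (with fixed choices of square roots and all four sign combinations up to overall sign), are pairwise distinct and no three of them are collinear; in particular they are not the intersection of C with a line. -/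
/-! The four points are `v = (±α, ±β, γ)`. They satisfy the single linear relation
`v₀ - v₁ - v₂ + v₃ = 0`, so a linear form vanishing at three of them vanishes at all four;
taking differences and sums of the points isolates `2α`, `2β`, `2γ`, which are nonzero in odd
characteristic, so the form is zero. Hence any three of the points are independent, which also
gives distinctness, since two points with the same last coordinate `γ` are proportional only if
they are equal. -/
open Matrix

lemma eq_zero_of_sum_mul_eq_zero {ι R : Type*} [Fintype ι] [Semiring R] [NoZeroDivisors R]
    {c f : ι → R} {n : ι} (hsum : ∑ m, c m * f m = 0) (hc : c n ≠ 0)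
    (hf : ∀ m, m ≠ n → f m = 0) : f n = 0 := by
  rw [Finset.sum_eq_single n (fun m _ hm ↦ by rw [hf m hm, mul_zero])
    (fun h ↦ absurd (Finset.mem_univ n) h)] at hsum
  exact (mul_eq_zero.mp hsum).resolve_left hc

lemma Fin.exists_forall_ne_eq_or_eq_or_eq (i j k : Fin 4) (hij : i ≠ j) (hik : i ≠ k)
    (hjk : j ≠ k) : ∃ n, ∀ m, m ≠ n → m = i ∨ m = j ∨ m = k := by
  revert i j k; decide

lemma Fin.exists_ne_and_ne (i j : Fin 4) : ∃ k, i ≠ k ∧ j ≠ k := by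
  revert i j; decide

section SignedPoints

variable {K : Type*} [Field K] (α β γ : K)

def signedPoints : Fin 4 → Fin 3 → K :=
  ![![α, β, γ], ![α, -β, γ], ![-α, β, γ], ![-α, -β, γ]]

lemma signedPoints_pow_four (i : Fin 4) (j : Fin 3) :
    signedPoints α β γ i j ^ 4 = (![α, β, γ] j ^ 2) ^ 2 := by
  fin_cases i <;> fin_cases j <;> simp [signedPoints] <;> ring

lemma signedPoints_apply_two (i : Fin 4) : signedPoints α β γ i 2 = γ := by
  fin_cases i <;> rfl

lemma sum_sign_mul_dotProduct_signedPoints (l : Fin 3 → K) :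
    ∑ m, ![1, -1, -1, 1] m * (l ⬝ᵥ signedPoints α β γ m) = 0 := by
  simp only [Fin.sum_univ_four, Fin.sum_univ_three, dotProduct, signedPoints, cons_val',
    cons_val_fin_one, cons_val_zero, cons_val_one, cons_val]
  ring

lemma dotProduct_signedPoints_eq_zero_of_three {l : Fin 3 → K} {i j k : Fin 4}
    (hij : i ≠ j) (hik : i ≠ k) (hjk : j ≠ k) (hi : l ⬝ᵥ signedPoints α β γ i = 0)
    (hj : l ⬝ᵥ signedPoints α β γ j = 0) (hk : l ⬝ᵥ signedPoints α β γ k = 0) (m : Fin 4) :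
    l ⬝ᵥ signedPoints α β γ m = 0 := by
  obtain ⟨n, hn⟩ := Fin.exists_forall_ne_eq_or_eq_or_eq i j k hij hik hjk
  have hvanish : ∀ m, m ≠ n → l ⬝ᵥ signedPoints α β γ m = 0 := by
    intro m hm
    rcases hn m hm with rfl | rfl | rfl <;> assumption
  by_cases hm : m = n
  · subst hm
    refine eq_zero_of_sum_mul_eq_zero (f := fun m ↦ l ⬝ᵥ signedPoints α β γ m)
      (sum_sign_mul_dotProduct_signedPoints α β γ l) ?_ hvanish
    fin_cases m <;> simp
  · exact hvanish m hm

variable {α β γ}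

lemma eq_zero_of_dotProduct_signedPoints_eq_zero (h2 : (2 : K) ≠ 0) (hα : α ≠ 0) (hβ : β ≠ 0)
    (hγ : γ ≠ 0) {l : Fin 3 → K} (hl : ∀ m, l ⬝ᵥ signedPoints α β γ m = 0) : l = 0 := by
  have hl0 := hl 0
  have hl1 := hl 1
  have hl2 := hl 2
  simp only [dotProduct, signedPoints, Fin.sum_univ_three, cons_val', cons_val_fin_one,
    cons_val_zero, cons_val_one, cons_val] at hl0 hl1 hl2
  have hcoord0 : l 0 * (2 * α) = 0 := by linear_combination hl0 - hl2
  have hcoord1 : l 1 * (2 * β) = 0 := by linear_combination hl0 - hl1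
  have hcoord2 : l 2 * (2 * γ) = 0 := by linear_combination hl1 + hl2
  ext j
  fin_cases j
  · exact (mul_eq_zero.mp hcoord0).resolve_right (mul_ne_zero h2 hα)
  · exact (mul_eq_zero.mp hcoord1).resolve_right (mul_ne_zero h2 hβ)
  · exact (mul_eq_zero.mp hcoord2).resolve_right (mul_ne_zero h2 hγ)

lemma linearIndependent_signedPoints (h2 : (2 : K) ≠ 0) (hα : α ≠ 0) (hβ : β ≠ 0)
    (hγ : γ ≠ 0) {i j k : Fin 4} (hij : i ≠ j) (hik : i ≠ k) (hjk : j ≠ k) :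
    LinearIndependent K ![signedPoints α β γ i, signedPoints α β γ j, signedPoints α β γ k] := by
  let A : Matrix (Fin 3) (Fin 3) K :=
    Matrix.of ![signedPoints α β γ i, signedPoints α β γ j, signedPoints α β γ k]
  suffices Function.Injective A.mulVecLin from
    Matrix.linearIndependent_rows_iff_isUnit.mpr (Matrix.mulVec_injective_iff_isUnit.mp this)
  refine (injective_iff_map_eq_zero _).mpr fun l hl ↦ ?_
  have hrow r : l ⬝ᵥ A r = 0 := by rw [dotProduct_comm]; exact congrFun hl r
  exact eq_zero_of_dotProduct_signedPoints_eq_zero h2 hα hβ hγ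
    (dotProduct_signedPoints_eq_zero_of_three α β γ hij hik hjk (hrow 0) (hrow 1) (hrow 2))

lemma signedPoints_injective (h2 : (2 : K) ≠ 0) (hα : α ≠ 0) (hβ : β ≠ 0) (hγ : γ ≠ 0) :
    Function.Injective (signedPoints α β γ) := by
  intro i j hv
  by_contra hij
  obtain ⟨k, hik, hjk⟩ := Fin.exists_ne_and_ne i j
  have := (linearIndependent_signedPoints h2 hα hβ hγ hij hik hjk).injective.ne
    (show (0 : Fin 3) ≠ 1 by decide)
  simp [hv] at this

end SignedPoints

theorem stmt_17_general (p : ℕ) [Fact p.Prime] (hodd : Odd p)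
    (a₁ a₂ a₃ y₁ y₂ y₃ : ZMod p)
    (hy : y₁ * y₂ * y₃ ≠ 0)
    (hP : a₁ * y₁ ^ 2 + a₂ * y₂ ^ 2 + a₃ * y₃ ^ 2 = 0)
    (α β γ : AlgebraicClosure (ZMod p))
    (hα : α ^ 2 = algebraMap (ZMod p) (AlgebraicClosure (ZMod p)) y₁)
    (hβ : β ^ 2 = algebraMap (ZMod p) (AlgebraicClosure (ZMod p)) y₂)
    (hγ : γ ^ 2 = algebraMap (ZMod p) (AlgebraicClosure (ZMod p)) y₃)
    (v : Fin 4 → Fin 3 → AlgebraicClosure (ZMod p))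
    (hv : v = ![![α, β, γ], ![α, -β, γ], ![-α, β, γ], ![-α, -β, γ]]) :
    (∀ i, algebraMap (ZMod p) _ a₁ * v i 0 ^ 4 +
        algebraMap (ZMod p) _ a₂ * v i 1 ^ 4 +
        algebraMap (ZMod p) _ a₃ * v i 2 ^ 4 = 0) ∧
    (∀ i j, i ≠ j → ∀ t : AlgebraicClosure (ZMod p), t • v i ≠ v j) ∧
    (∀ i j k, i ≠ j → i ≠ k → j ≠ k →
      LinearIndependent (AlgebraicClosure (ZMod p)) ![v i, v j, v k]) ∧
    ¬ ∃ l : Fin 3 → AlgebraicClosure (ZMod p), l ≠ 0 ∧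
        ∀ i, l 0 * v i 0 + l 1 * v i 1 + l 2 * v i 2 = 0 := by
  set F := algebraMap (ZMod p) (AlgebraicClosure (ZMod p))
  change v = signedPoints α β γ at hv
  subst hv
  have h2 : (2 : AlgebraicClosure (ZMod p)) ≠ 0 := by
    refine Ring.two_ne_zero ?_
    rw [ringChar.eq _ p]
    rintro rfl
    exact Nat.not_even_iff_odd.mpr hodd even_two
  simp only [mul_ne_zero_iff] at hy
  have hne {x : AlgebraicClosure (ZMod p)} {y : ZMod p} (hx : x ^ 2 = F y) (hy : y ≠ 0) :
      x ≠ 0 := by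
    rintro rfl
    exact hy (F.injective (by rw [← hx, map_zero, zero_pow two_ne_zero]))
  have hα0 := hne hα hy.1.1
  have hβ0 := hne hβ hy.1.2
  have hγ0 := hne hγ hy.2
  refine ⟨fun i ↦ ?_, fun i j hij t ht ↦ ?_,
    fun i j k ↦ linearIndependent_signedPoints h2 hα0 hβ0 hγ0,
    fun ⟨l, hl, hvanish⟩ ↦
      hl (eq_zero_of_dotProduct_signedPoints_eq_zero h2 hα0 hβ0 hγ0 fun m ↦ ?_)⟩
  · simp only [signedPoints_pow_four]
    simpa [hα, hβ, hγ] using congrArg F hP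
  · have ht1 : t = 1 := by
      have := congrFun ht 2
      simp only [Pi.smul_apply, signedPoints_apply_two, smul_eq_mul] at this
      exact (mul_eq_right₀ hγ0).mp this
    exact hij (signedPoints_injective h2 hα0 hβ0 hγ0 (by rwa [ht1, one_smul] at ht))
  · simpa [dotProduct, Fin.sum_univ_three] using hvanish m

/-- Let `p` be an odd prime and `P = [y₁ : y₂ : y₃]` a point with all
coordinates nonzero on the smooth conic `Z : a₁Y₁² + a₂Y₂² + a₃Y₃² = 0` over
`F_p` (with `a₁a₂a₃ ≠ 0`).  Let `α, β, γ` be square roots of `y₁, y₂, y₃` in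
an algebraic closure `K` of `F_p`.  Then the four points `[±α : ±β : γ]` lie
on the quartic `C : a₁X₁⁴ + a₂X₂⁴ + a₃X₃⁴ = 0`, are pairwise distinct as
projective points, no three of them are collinear, and in particular they are
not the intersection of `C` with a line. -/
theorem stmt_17 (p : ℕ) [Fact p.Prime] (hodd : Odd p)
    (a₁ a₂ a₃ y₁ y₂ y₃ : ZMod p)
    (ha : a₁ * a₂ * a₃ ≠ 0) (hy : y₁ * y₂ * y₃ ≠ 0)
    (hP : a₁ * y₁ ^ 2 + a₂ * y₂ ^ 2 + a₃ * y₃ ^ 2 = 0)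
    (α β γ : AlgebraicClosure (ZMod p))
    (hα : α ^ 2 = algebraMap (ZMod p) (AlgebraicClosure (ZMod p)) y₁)
    (hβ : β ^ 2 = algebraMap (ZMod p) (AlgebraicClosure (ZMod p)) y₂)
    (hγ : γ ^ 2 = algebraMap (ZMod p) (AlgebraicClosure (ZMod p)) y₃)
    (v : Fin 4 → Fin 3 → AlgebraicClosure (ZMod p))
    (hv : v = ![![α, β, γ], ![α, -β, γ], ![-α, β, γ], ![-α, -β, γ]]) :
    (∀ i, algebraMap (ZMod p) _ a₁ * v i 0 ^ 4 +
        algebraMap (ZMod p) _ a₂ * v i 1 ^ 4 +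
        algebraMap (ZMod p) _ a₃ * v i 2 ^ 4 = 0) ∧
    (∀ i j, i ≠ j → ∀ t : AlgebraicClosure (ZMod p), t • v i ≠ v j) ∧
    (∀ i j k, i ≠ j → i ≠ k → j ≠ k →
      LinearIndependent (AlgebraicClosure (ZMod p)) ![v i, v j, v k]) ∧
    ¬ ∃ l : Fin 3 → AlgebraicClosure (ZMod p), l ≠ 0 ∧
        ∀ i, l 0 * v i 0 + l 1 * v i 1 + l 2 * v i 2 = 0 :=
  stmt_17_general p hodd a₁ a₂ a₃ y₁ y₂ y₃ hy hP α β γ hα hβ hγ v hv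
end
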